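/- arXiv:2502.00052 — 3 statements merged into one kernel-verified Lean document; each statement's English description precedes it below -/
import Mathlib

section
/- Under the same setup, with Y uniform on K classes and l(y,y') = Δl·1{y=y'} + l0, the quantity HSIC(X,Y) := E[k(X,X')l(Y,Y')] - 2E[k(X,X')l(Y,Y'')] + E[k(X,X')]·E[l(Y,Y')] satisfies HSIC(X,Y) = (Δl/K)·(E[k(X,X') | Y = Y'] - E[k(X,X')]). -/
open MeasureTheory

/-!
Write `δ(y, y') = 1{y = y'}`, so that `l = Δl • δ + l0`. Every row of `l` sums to
`Δl + K l0`, so the two `Y''`-averaged terms collapse to `(Δl/K + l0)·E[k]` and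
`Δl/K + l0`, while the first term is `Δl·E[k δ(Y, Y')] + l0·E[k]`. The `l0` contributions
cancel, leaving `Δl·E[k δ(Y, Y')] - (Δl/K)·E[k]`.
-/

section TwoValuedLabelKernel

variable {𝒴 : Type*} [Fintype 𝒴] [DecidableEq 𝒴] {l : 𝒴 → 𝒴 → ℝ} {Δl l0 : ℝ}

lemma sum_two_valued_kernel (hl : ∀ y y', l y y' = Δl * (if y = y' then (1 : ℝ) else 0) + l0)
    (y : 𝒴) : ∑ y', l y y' = Δl + Fintype.card 𝒴 * l0 := by
  simp [hl, Finset.sum_add_distrib]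

variable {Ω : Type*} [MeasurableSpace Ω] {ν : Measure Ω} {f : Ω → ℝ}

lemma integrable_mul_comp_of_finite {β : Type*} [Finite β] [MeasurableSpace β]
    [MeasurableSingletonClass β] (hf : Integrable f ν) {φ : Ω → β} (hφ : Measurable φ)
    (g : β → ℝ) : Integrable (fun x => f x * g (φ x)) ν := by
  obtain ⟨c, hc⟩ := (Set.finite_range fun y => ‖g y‖).bddAbove
  exact hf.mul_bdd (Measurable.of_discrete.comp hφ).aestronglyMeasurable
    (c := c) (ae_of_all _ fun x => hc ⟨φ x, rfl⟩)

variable [MeasurableSpace 𝒴] [MeasurableSingletonClass 𝒴]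

lemma integral_mul_two_valued_kernel
    (hl : ∀ y y', l y y' = Δl * (if y = y' then (1 : ℝ) else 0) + l0)
    (hf : Integrable f ν) {φ ψ : Ω → 𝒴} (hφ : Measurable φ) (hψ : Measurable ψ) :
    ∫ x, f x * l (φ x) (ψ x) ∂ν =
      Δl * ∫ x, f x * (if φ x = ψ x then (1 : ℝ) else 0) ∂ν + l0 * ∫ x, f x ∂ν := by
  have hδ := integrable_mul_comp_of_finite hf (hφ.prodMk hψ)
    (fun p : 𝒴 × 𝒴 => if p.1 = p.2 then (1 : ℝ) else 0)
  simp only [hl, mul_add, mul_left_comm (f _) Δl]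
  rw [integral_add (hδ.const_mul Δl) (hf.mul_const l0), integral_const_mul, integral_mul_const,
    mul_comm _ l0]

lemma sum_integral_mul_two_valued_kernel
    (hl : ∀ y y', l y y' = Δl * (if y = y' then (1 : ℝ) else 0) + l0)
    (hf : Integrable f ν) {φ : Ω → 𝒴} (hφ : Measurable φ) :
    ∑ y', ∫ x, f x * l (φ x) y' ∂ν = (Δl + Fintype.card 𝒴 * l0) * ∫ x, f x ∂ν := by
  rw [← integral_finsetSum _ fun y' _ => integrable_mul_comp_of_finite hf hφ (l · y')]
  simp only [← Finset.mul_sum, sum_two_valued_kernel hl, integral_mul_const, mul_comm]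

end TwoValuedLabelKernel

/-- The conditioning event `{Y = Y'}` has probability `1/K`, so the conditional expectation
`E[k(X,X') | Y = Y']` is encoded as `K` times the restricted expectation. -/
theorem stmt7_general {𝒳 : Type*} [MeasurableSpace 𝒳] {𝒴 : Type*} [Fintype 𝒴]
    [MeasurableSpace 𝒴] [MeasurableSingletonClass 𝒴] [DecidableEq 𝒴]
    (K : ℕ) (hK : Fintype.card 𝒴 = K) (hKpos : 0 < K)
    (μ : Measure (𝒳 × 𝒴)) [IsProbabilityMeasure μ]
    (Δl l0 : ℝ) (l : 𝒴 → 𝒴 → ℝ)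
    (hl : ∀ y y', l y y' = Δl * (if y = y' then (1 : ℝ) else 0) + l0)
    (k : 𝒳 → 𝒳 → ℝ) (hkm : Measurable (fun z : 𝒳 × 𝒳 => k z.1 z.2))
    (M : ℝ) (hkb : ∀ x x', |k x x'| ≤ M) :
    (∫ q, k q.1.1 q.2.1 * l q.1.2 q.2.2 ∂(μ.prod μ))
      - 2 * ((1 / (K : ℝ)) * ∑ y'' : 𝒴, ∫ q, k q.1.1 q.2.1 * l q.1.2 y'' ∂(μ.prod μ))
      + (∫ q, k q.1.1 q.2.1 ∂(μ.prod μ))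
        * ((1 / (K : ℝ)) * ∑ y'' : 𝒴, ∫ q, l q.1.2 y'' ∂(μ.prod μ)) =
    (Δl / K) *
      ((K : ℝ) * (∫ q, k q.1.1 q.2.1 * (if q.1.2 = q.2.2 then (1 : ℝ) else 0) ∂(μ.prod μ))
        - ∫ q, k q.1.1 q.2.1 ∂(μ.prod μ)) := by
  have hk : Integrable (fun q : (𝒳 × 𝒴) × (𝒳 × 𝒴) => k q.1.1 q.2.1) (μ.prod μ) :=
    .of_bound (hkm.comp (measurable_fst.fst.prodMk measurable_snd.fst)).aestronglyMeasurable M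
      (ae_of_all _ fun q => hkb q.1.1 q.2.1)
  have hY : Measurable fun q : (𝒳 × 𝒴) × (𝒳 × 𝒴) => q.1.2 := measurable_fst.snd
  have hY' : Measurable fun q : (𝒳 × 𝒴) × (𝒳 × 𝒴) => q.2.2 := measurable_snd.snd
  have hlabel : ∑ y'' : 𝒴, ∫ q, l q.1.2 y'' ∂(μ.prod μ) = Δl + K * l0 := by
    simpa [hK] using sum_integral_mul_two_valued_kernel hl (integrable_const (μ := μ.prod μ) (1 : ℝ)) hY
  rw [integral_mul_two_valued_kernel hl hk hY hY', sum_integral_mul_two_valued_kernel hl hk hY,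
    hlabel, hK]
  have hK0 : (K : ℝ) ≠ 0 := by positivity
  field_simp
  ring

/-- HSIC(X,Y) = (Δl/K)·(E[k(X,X') | Y = Y'] − E[k(X,X')]) for a two-valued label kernel
and `Y` uniform on `K` classes.  The conditioning event `{Y = Y'}` has probability `1/K`,
so the conditional expectation is `K` times the restricted expectation. -/
theorem stmt7 {𝒳 : Type*} [MeasurableSpace 𝒳] {𝒴 : Type*} [Fintype 𝒴]
    [MeasurableSpace 𝒴] [MeasurableSingletonClass 𝒴] [DecidableEq 𝒴]
    (K : ℕ) (hK : Fintype.card 𝒴 = K) (hKpos : 0 < K)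
    (μ : Measure (𝒳 × 𝒴)) [IsProbabilityMeasure μ]
    (hYunif : ∀ y : 𝒴, μ {p : 𝒳 × 𝒴 | p.2 = y} = 1 / (K : ENNReal))
    (Δl l0 : ℝ) (l : 𝒴 → 𝒴 → ℝ)
    (hl : ∀ y y', l y y' = Δl * (if y = y' then (1 : ℝ) else 0) + l0)
    (k : 𝒳 → 𝒳 → ℝ) (hkm : Measurable (fun z : 𝒳 × 𝒳 => k z.1 z.2))
    (M : ℝ) (hkb : ∀ x x', |k x x'| ≤ M) :
    (∫ q, k q.1.1 q.2.1 * l q.1.2 q.2.2 ∂(μ.prod μ))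
      - 2 * ((1 / (K : ℝ)) * ∑ y'' : 𝒴, ∫ q, k q.1.1 q.2.1 * l q.1.2 y'' ∂(μ.prod μ))
      + (∫ q, k q.1.1 q.2.1 ∂(μ.prod μ))
        * ((1 / (K : ℝ)) * ∑ y'' : 𝒴, ∫ q, l q.1.2 y'' ∂(μ.prod μ)) =
    (Δl / K) *
      ((K : ℝ) * (∫ q, k q.1.1 q.2.1 * (if q.1.2 = q.2.2 then (1 : ℝ) else 0) ∂(μ.prod μ))
        - ∫ q, k q.1.1 q.2.1 ∂(μ.prod μ)) :=
  stmt7_general K hK hKpos μ Δl l0 l hl k hkm M hkb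
end

section
/- Let k : X × X → R be bounded measurable with |k| ≤ M, μ a probability measure, τ > 0, and fix x ∈ X. Writing m(x) = E_{X'∼μ}[k(x,X')] and v(x) = Var_{X'∼μ}[k(x,X')], one has the second-order bound: |log E_{X'∼μ}[e^{k(x,X')/τ}] - m(x)/τ - v(x)/(2τ²)| ≤ C(M)/τ³ for some constant C(M) depending only on M (uniform in x, μ, and τ ≥ 1). -/
/-!
Centre and rescale: with `m = ∫ f` and `g = (f - m) / τ`, which has mean zero and `|g| ≤ 2M/τ`,
`log ∫ exp (f / τ) = m / τ + log ∫ exp g`. Integrating the Taylor bound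
`|exp s - ∑_{i<n} s^i/i!| ≤ |s|^n exp |s|` gives `∫ exp g = 1 + ∫ g² / 2 + O(τ⁻³)` and
`∫ exp g - 1 = O(τ⁻²)`, while `∫ exp g ≥ 1 + ∫ g = 1`; on `[1, ∞)` the logarithm is
`y - 1 + O((y - 1)²)`.
-/

open MeasureTheory Finset

open Nat in
lemma Real.abs_exp_sub_sum_range_le (x : ℝ) (n : ℕ) :
    |Real.exp x - ∑ m ∈ range n, x ^ m / m !| ≤ |x| ^ n * Real.exp |x| := by
  have := Complex.norm_exp_sub_sum_le_norm_mul_exp x n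
  rw [Complex.norm_real, Real.norm_eq_abs] at this
  exact_mod_cast this

lemma Real.abs_log_sub_sub_one_le_sq {y : ℝ} (hy : 1 ≤ y) :
    |Real.log y - (y - 1)| ≤ (y - 1) ^ 2 := by
  have hy0 : 0 < y := by linarith
  have hupper := Real.log_le_sub_one_of_pos hy0
  have hlower := Real.one_sub_inv_le_log_of_pos hy0
  rw [abs_of_nonpos (by linarith)]
  have : y - 1 - (1 - y⁻¹) ≤ (y - 1) ^ 2 := by
    rw [show y - 1 - (1 - y⁻¹) = (y - 1) ^ 2 / y by field_simp]
    exact div_le_self (sq_nonneg _) hy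
  linarith

section ProbabilitySpace

variable {X : Type*} [MeasurableSpace X] {μ : Measure X} [IsProbabilityMeasure μ]
  {g : X → ℝ} {B : ℝ}

lemma integrable_pow_of_abs_le (hg : AEStronglyMeasurable g μ) (hgB : ∀ᵐ x ∂μ, |g x| ≤ B)
    (m : ℕ) : Integrable (fun x ↦ g x ^ m) μ :=
  .of_bound (hg.pow m) (B ^ m) <| hgB.mono fun x hx ↦ by
    rw [Real.norm_eq_abs, abs_pow]; exact pow_le_pow_left₀ (abs_nonneg _) hx m

lemma integrable_exp_of_abs_le (hg : AEStronglyMeasurable g μ) (hgB : ∀ᵐ x ∂μ, |g x| ≤ B) :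
    Integrable (fun x ↦ Real.exp (g x)) μ :=
  .of_bound (Real.continuous_exp.comp_aestronglyMeasurable hg) (Real.exp B) <| hgB.mono
    fun x hx ↦ by
      rw [Real.norm_eq_abs, Real.abs_exp]
      exact Real.exp_le_exp.2 ((le_abs_self _).trans hx)

open Nat in
lemma abs_integral_exp_sub_sum_range_le (hg : AEStronglyMeasurable g μ)
    (hgB : ∀ᵐ x ∂μ, |g x| ≤ B) (n : ℕ) :
    |∫ x, Real.exp (g x) ∂μ - ∑ m ∈ range n, (∫ x, g x ^ m ∂μ) / m !| ≤ B ^ n * Real.exp B := by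
  have hsum : ∑ m ∈ range n, (∫ x, g x ^ m ∂μ) / m ! = ∫ x, ∑ m ∈ range n, g x ^ m / m ! ∂μ := by
    rw [integral_finsetSum _ fun m _ ↦ (integrable_pow_of_abs_le hg hgB m).div_const _]
    simp only [integral_div]
  rw [hsum, ← integral_sub (integrable_exp_of_abs_le hg hgB)
    (integrable_finsetSum _ fun m _ ↦ (integrable_pow_of_abs_le hg hgB m).div_const _)]
  have hpt : ∀ᵐ x ∂μ, ‖Real.exp (g x) - ∑ m ∈ range n, g x ^ m / (m ! : ℝ)‖ ≤ B ^ n * Real.exp B :=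
    hgB.mono fun x hx ↦ (Real.abs_exp_sub_sum_range_le (g x) n).trans <|
      mul_le_mul (pow_le_pow_left₀ (abs_nonneg _) hx n) (Real.exp_le_exp.2 hx) (by positivity)
        (pow_nonneg ((abs_nonneg _).trans hx) n)
  simpa using norm_integral_le_of_norm_le_const hpt

lemma one_le_integral_exp_of_integral_eq_zero (hg : AEStronglyMeasurable g μ)
    (hgB : ∀ᵐ x ∂μ, |g x| ≤ B) (h0 : ∫ x, g x ∂μ = 0) : 1 ≤ ∫ x, Real.exp (g x) ∂μ := by
  have hgi : Integrable g μ := by simpa using integrable_pow_of_abs_le hg hgB 1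
  calc 1 = ∫ x, (g x + 1) ∂μ := by simp [integral_add hgi (integrable_const 1), h0]
    _ ≤ ∫ x, Real.exp (g x) ∂μ := integral_mono (hgi.add (integrable_const 1))
        (integrable_exp_of_abs_le hg hgB) fun x ↦ Real.add_one_le_exp (g x)

lemma abs_log_integral_exp_sub_le_of_integral_eq_zero (hg : AEStronglyMeasurable g μ)
    (hgB : ∀ᵐ x ∂μ, |g x| ≤ B) (h0 : ∫ x, g x ∂μ = 0) :
    |Real.log (∫ x, Real.exp (g x) ∂μ) - (∫ x, g x ^ 2 ∂μ) / 2|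
      ≤ B ^ 3 * (Real.exp B + B * Real.exp (2 * B)) := by
  set J := ∫ x, Real.exp (g x) ∂μ
  have hJ : 1 ≤ J := one_le_integral_exp_of_integral_eq_zero hg hgB h0
  have hfirst : |J - 1| ≤ B ^ 2 * Real.exp B := by
    simpa [sum_range_succ, h0] using abs_integral_exp_sub_sum_range_le hg hgB 2
  have hsecond : |J - 1 - (∫ x, g x ^ 2 ∂μ) / 2| ≤ B ^ 3 * Real.exp B := by
    simpa [sum_range_succ, h0, sub_sub] using abs_integral_exp_sub_sum_range_le hg hgB 3
  calc _ ≤ |Real.log J - (J - 1)| + |J - 1 - (∫ x, g x ^ 2 ∂μ) / 2| := abs_sub_le _ _ _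
    _ ≤ (B ^ 2 * Real.exp B) ^ 2 + B ^ 3 * Real.exp B := by
        gcongr
        calc _ ≤ (J - 1) ^ 2 := Real.abs_log_sub_sub_one_le_sq hJ
          _ = |J - 1| ^ 2 := (sq_abs _).symm
          _ ≤ _ := by gcongr
    _ = _ := by rw [two_mul, Real.exp_add]; ring

lemma abs_log_integral_exp_div_sub_le {f : X → ℝ} {M τ : ℝ} (hf : AEStronglyMeasurable f μ)
    (hfM : ∀ᵐ x ∂μ, |f x| ≤ M) (hτ : 1 ≤ τ) :
    |Real.log (∫ x, Real.exp (f x / τ) ∂μ) - (∫ x, f x ∂μ) / τ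
        - (∫ x, (f x - ∫ y, f y ∂μ) ^ 2 ∂μ) / (2 * τ ^ 2)|
      ≤ 8 * M ^ 3 * (Real.exp (2 * M) + 2 * M * Real.exp (4 * M)) / τ ^ 3 := by
  set m := ∫ x, f x ∂μ
  have hτ0 : 0 < τ := by linarith
  have hM : 0 ≤ M := by
    obtain ⟨x, hx⟩ := hfM.exists
    exact (abs_nonneg _).trans hx
  have hm : |m| ≤ M := by
    simpa using norm_integral_le_of_norm_le_const (μ := μ) (f := f) (by simpa using hfM)
  set g := fun x ↦ (f x - m) / τ
  have hg : AEStronglyMeasurable g μ := by fun_prop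
  have hgB : ∀ᵐ x ∂μ, |g x| ≤ 2 * M / τ := hfM.mono fun x hx ↦ by
    rw [abs_div, abs_of_pos hτ0]
    gcongr
    linarith [abs_sub (f x) m]
  have h0 : ∫ x, g x ∂μ = 0 := by
    have hfi : Integrable f μ := by simpa using integrable_pow_of_abs_le hf hfM 1
    simp [g, integral_div, integral_sub hfi (integrable_const m), m]
  have hshift : ∫ x, Real.exp (f x / τ) ∂μ = Real.exp (m / τ) * ∫ x, Real.exp (g x) ∂μ := by
    rw [← integral_const_mul]
    congr with x
    rw [← Real.exp_add]
    congr 1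
    simp only [g]
    field_simp
    ring
  have hvar : (∫ x, g x ^ 2 ∂μ) / 2 = (∫ x, (f x - m) ^ 2 ∂μ) / (2 * τ ^ 2) := by
    simp only [g, div_pow, integral_div]
    ring
  have hJ : 0 < ∫ x, Real.exp (g x) ∂μ :=
    one_pos.trans_le (one_le_integral_exp_of_integral_eq_zero hg hgB h0)
  rw [hshift, Real.log_mul (Real.exp_pos _).ne' hJ.ne', Real.log_exp, add_sub_cancel_left, ← hvar]
  calc _ ≤ (2 * M / τ) ^ 3 * (Real.exp (2 * M / τ) + 2 * M / τ * Real.exp (2 * (2 * M / τ))) :=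
        abs_log_integral_exp_sub_le_of_integral_eq_zero hg hgB h0
    _ ≤ (2 * M / τ) ^ 3 * (Real.exp (2 * M) + 2 * M * Real.exp (4 * M)) := by
        have hB : 2 * M / τ ≤ 2 * M := div_le_self (by positivity) hτ
        have h2B : 2 * (2 * M / τ) ≤ 4 * M := by linarith
        gcongr
    _ = _ := by ring

end ProbabilitySpace

theorem stmt9_general (M : ℝ) :
    ∃ C : ℝ, ∀ (X : Type) (mX : MeasurableSpace X) (μ : Measure X),
      IsProbabilityMeasure μ →
      ∀ (k : X → X → ℝ), Measurable (fun z : X × X => k z.1 z.2) →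
      (∀ x x', |k x x'| ≤ M) →
      ∀ τ : ℝ, 1 ≤ τ →
      ∀ x : X,
        |Real.log (∫ x', Real.exp (k x x' / τ) ∂μ)
            - (∫ x', k x x' ∂μ) / τ
            - (∫ x', (k x x' - ∫ x'', k x x'' ∂μ) ^ 2 ∂μ) / (2 * τ ^ 2)|
          ≤ C / τ ^ 3 := by
  refine ⟨8 * M ^ 3 * (Real.exp (2 * M) + 2 * M * Real.exp (4 * M)), ?_⟩
  intro X _ μ _ k hk hkM τ hτ x
  exact abs_log_integral_exp_div_sub_le (hk.comp measurable_prodMk_left).aestronglyMeasurable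
    (.of_forall (hkM x)) hτ

/-- Second-order expansion of the log-partition term, with error `C(M)/τ³`
uniform in `x`, `μ` and `τ ≥ 1`. -/
theorem stmt9 (M : ℝ) (hM : 0 ≤ M) :
    ∃ C : ℝ, ∀ (X : Type) (mX : MeasurableSpace X) (μ : Measure X),
      IsProbabilityMeasure μ →
      ∀ (k : X → X → ℝ), Measurable (fun z : X × X => k z.1 z.2) →
      (∀ x x', |k x x'| ≤ M) →
      ∀ τ : ℝ, 1 ≤ τ →
      ∀ x : X,
        |Real.log (∫ x', Real.exp (k x x' / τ) ∂μ)
            - (∫ x', k x x' ∂μ) / τ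
            - (∫ x', (k x x' - ∫ x'', k x x'' ∂μ) ^ 2 ∂μ) / (2 * τ ^ 2)|
          ≤ C / τ ^ 3 :=
  stmt9_general M
end

section
/- Let μ be a probability measure on X, k bounded measurable with |k| ≤ M, and τ ≥ 2M. Then for every x, the second-order expansion error satisfies: E_{X'∼μ}[e^{(k(x,X') - m(x))/τ}] lies between 1 + v(x)/(2τ²) - M³/τ³·e and 1 + v(x)/(2τ²) + M³/τ³·e, where m(x) = E_{X'∼μ}[k(x,X')] and v(x) = Var_{X'∼μ}[k(x,X')]. -/
/-!
Write `t = (k(x,X') - m(x))/τ`. Since `|k| ≤ M`, also `|m(x)| ≤ M`, so `|t| ≤ 2M/τ ≤ 1`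
and the Taylor remainder of `exp` at order three is at most
`|t|³ · 2/9 ≤ (M/τ)³ · 16/9 ≤ (M/τ)³ e`.
Integrating `1 + t + t²/2` against `μ` gives `1 + v(x)/(2τ²)`, because `t` is centred.
-/

open MeasureTheory

lemma Real.abs_exp_sub_one_sub_id_sub_sq_le {t : ℝ} (ht : |t| ≤ 1) :
    |Real.exp t - (1 + t + t ^ 2 / 2)| ≤ |t| ^ 3 * (2 / 9) := by
  have h := Real.exp_bound ht (n := 3) (by norm_num)
  norm_num [Finset.sum_range_succ, Nat.factorial] at h
  convert h using 3

lemma abs_sub_integral_le_two_mul {X : Type*} [MeasurableSpace X]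
    {μ : Measure X} [IsProbabilityMeasure μ] {f : X → ℝ} {M : ℝ} (hfM : ∀ x, |f x| ≤ M)
    (x : X) :
    |f x - ∫ y, f y ∂μ| ≤ 2 * M := by
  have hmean : |∫ y, f y ∂μ| ≤ M := by
    simpa using norm_integral_le_of_norm_le_const (μ := μ) (f := f) (.of_forall hfM)
  linarith [abs_sub (f x) (∫ y, f y ∂μ), hfM x]

lemma abs_integral_exp_sub_le_of_integral_eq_zero {X : Type*} [MeasurableSpace X]
    {μ : Measure X} [IsProbabilityMeasure μ] {h : X → ℝ} (hmeas : AEStronglyMeasurable h μ)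
    {r : ℝ} (hr : r ≤ 1) (hhr : ∀ x, |h x| ≤ r) (hcentred : ∫ x, h x ∂μ = 0) :
    |∫ x, Real.exp (h x) ∂μ - (1 + (∫ x, h x ^ 2 ∂μ) / 2)| ≤ r ^ 3 * (2 / 9) := by
  have hint : Integrable h μ := .of_bound hmeas r (.of_forall hhr)
  have hint_sq : Integrable (fun x ↦ h x ^ 2 / 2) μ :=
    (Integrable.of_bound (hmeas.pow 2) (r ^ 2) (.of_forall fun x ↦ by
      simpa [abs_pow] using pow_le_pow_left₀ (abs_nonneg _) (hhr x) 2)).div_const 2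
  have hint_lin : Integrable (fun x ↦ 1 + h x) μ := (integrable_const 1).add hint
  have hint_poly : Integrable (fun x ↦ 1 + h x + h x ^ 2 / 2) μ := hint_lin.add hint_sq
  have hint_exp : Integrable (fun x ↦ Real.exp (h x)) μ :=
    .of_bound (Real.continuous_exp.comp_aestronglyMeasurable hmeas) (Real.exp 1)
      (.of_forall fun x ↦ by
        rw [Real.norm_of_nonneg (Real.exp_pos _).le, Real.exp_le_exp]
        exact (le_abs_self _).trans ((hhr x).trans hr))
  have hremainder : ∫ x, Real.exp (h x) ∂μ - (1 + (∫ x, h x ^ 2 ∂μ) / 2)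
      = ∫ x, (Real.exp (h x) - (1 + h x + h x ^ 2 / 2)) ∂μ := by
    rw [integral_sub hint_exp hint_poly, integral_add hint_lin hint_sq,
      integral_add (integrable_const 1) hint, integral_div, hcentred]
    simp
  have hpointwise : ∀ x, ‖Real.exp (h x) - (1 + h x + h x ^ 2 / 2)‖ ≤ r ^ 3 * (2 / 9) := by
    intro x
    rw [Real.norm_eq_abs]
    calc _ ≤ |h x| ^ 3 * (2 / 9) := Real.abs_exp_sub_one_sub_id_sub_sq_le ((hhr x).trans hr)
      _ ≤ r ^ 3 * (2 / 9) := by gcongr; exact hhr x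
  rw [hremainder]
  simpa using norm_integral_le_of_norm_le_const (μ := μ) (.of_forall hpointwise)

lemma abs_integral_exp_centred_div_sub_le {X : Type*} [MeasurableSpace X]
    {μ : Measure X} [IsProbabilityMeasure μ] {f : X → ℝ} (hf : AEStronglyMeasurable f μ)
    {M τ : ℝ} (hfM : ∀ x, |f x| ≤ M) (hτpos : 0 < τ) (hτ : 2 * M ≤ τ) :
    |∫ x, Real.exp ((f x - ∫ y, f y ∂μ) / τ) ∂μ
        - (1 + (∫ x, (f x - ∫ y, f y ∂μ) ^ 2 ∂μ) / (2 * τ ^ 2))|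
      ≤ M ^ 3 / τ ^ 3 * Real.exp 1 := by
  set m := ∫ y, f y ∂μ with hm
  have hM : 0 ≤ M := by
    obtain ⟨x⟩ := nonempty_of_isProbabilityMeasure μ
    exact (abs_nonneg _).trans (hfM x)
  have hcentred : ∫ x, (f x - m) / τ ∂μ = 0 := by
    rw [integral_div, integral_sub (.of_bound hf M (.of_forall hfM)) (integrable_const m)]
    simp [hm]
  have hsq :
      (∫ x, ((f x - m) / τ) ^ 2 ∂μ) / 2 = (∫ x, (f x - m) ^ 2 ∂μ) / (2 * τ ^ 2) := by
    simp_rw [div_pow, integral_div]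
    ring
  have hbound := abs_integral_exp_sub_le_of_integral_eq_zero (by fun_prop)
    ((div_le_one hτpos).2 hτ) (fun x ↦ by
      rw [abs_div, abs_of_pos hτpos]
      exact div_le_div_of_nonneg_right (abs_sub_integral_le_two_mul hfM x) hτpos.le) hcentred
  rw [hsq] at hbound
  refine hbound.trans ?_
  have he : (16 / 9 : ℝ) ≤ Real.exp 1 := by linarith [Real.exp_one_gt_d9]
  calc (2 * M / τ) ^ 3 * (2 / 9) = M ^ 3 / τ ^ 3 * (16 / 9) := by ring
    _ ≤ M ^ 3 / τ ^ 3 * Real.exp 1 := by gcongr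

/-- Second-order bounds on the centered exponential moment for `τ ≥ 2M`. -/
theorem stmt19 {X : Type*} [MeasurableSpace X]
    (μ : Measure X) [IsProbabilityMeasure μ]
    (k : X → X → ℝ) (hkm : Measurable (fun z : X × X => k z.1 z.2))
    (M : ℝ) (hkb : ∀ x x', |k x x'| ≤ M)
    (τ : ℝ) (hτpos : 0 < τ) (hτ : 2 * M ≤ τ) :
    ∀ x : X,
      (1 + (∫ x', (k x x' - ∫ x'', k x x'' ∂μ) ^ 2 ∂μ) / (2 * τ ^ 2)
          - M ^ 3 / τ ^ 3 * Real.exp 1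
        ≤ ∫ x', Real.exp ((k x x' - ∫ x'', k x x'' ∂μ) / τ) ∂μ)
      ∧ (∫ x', Real.exp ((k x x' - ∫ x'', k x x'' ∂μ) / τ) ∂μ
        ≤ 1 + (∫ x', (k x x' - ∫ x'', k x x'' ∂μ) ^ 2 ∂μ) / (2 * τ ^ 2)
          + M ^ 3 / τ ^ 3 * Real.exp 1) := by
  intro x
  have hmeas : Measurable (k x) := hkm.of_uncurry_left
  obtain ⟨hlower, hupper⟩ := abs_le.mp
    (abs_integral_exp_centred_div_sub_le (μ := μ) hmeas.aestronglyMeasurable (hkb x) hτpos hτ)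
  exact ⟨by linarith, by linarith⟩
end
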